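/- For all indices 1 ≤ i, j ≤ ℓ and every integer m, the quantum affine Cartan–raising relation holds mode-wise: z·K_i(z)∘E_j^{(m)} − q_i^{a_{ij}}·K_i(z)∘E_j^{(m+1)} = q_i^{a_{ij}}·z·E_j^{(m)}∘K_i(z) − E_j^{(m+1)}∘K_i(z), as an identity of ℂ(s)(z)-linear endomorphisms of L (this is the coefficient of w^{−m} in the relation (z − q_i^{a_{ij}}w)K_i^{±}(z)E_j(w) = (q_i^{a_{ij}}z − w)E_j(w)K_i^{±}(z)). -/
import Mathlib


open MvPolynomial Finset

set_option synthInstance.maxHeartbeats 1000000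
set_option maxHeartbeats 1000000

noncomputable section

/-- The base field `ℂ(s)`. -/
abbrev K0 := RatFunc ℂ

/-- The variables. -/
abbrev Var (ℓ : ℕ) (m l : Fin ℓ → ℕ) := Unit ⊕ (((i : Fin ℓ) × Fin (m i)) ⊕ ((i : Fin ℓ) × Fin (l i)))

/-- The rational function field over `ℂ(s)` in the given variables. -/
abbrev FF (ℓ : ℕ) (m l : Fin ℓ → ℕ) := FractionRing (MvPolynomial (Var ℓ m l) K0)

variable (ℓ : ℕ) (m l : Fin ℓ → ℕ) (d : Fin ℓ → ℕ) (a : Fin ℓ → Fin ℓ → ℤ)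

def cstHom : K0 →+* FF ℓ m l :=
  (algebraMap (MvPolynomial (Var ℓ m l) K0) (FF ℓ m l)).comp
    (C : K0 →+* MvPolynomial (Var ℓ m l) K0)

def cst (c : K0) : FF ℓ m l := cstHom ℓ m l c

/-- The variable `V_{i,k}`. -/
def V (i : Fin ℓ) (k : Fin (m i)) : FF ℓ m l :=
  algebraMap (MvPolynomial (Var ℓ m l) K0) (FF ℓ m l) (X (Sum.inr (Sum.inl ⟨i, k⟩)))

/-- The variable `W_{i,t}`. -/
def W (i : Fin ℓ) (t : Fin (l i)) : FF ℓ m l :=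
  algebraMap (MvPolynomial (Var ℓ m l) K0) (FF ℓ m l) (X (Sum.inr (Sum.inr ⟨i, t⟩)))

/-- The variable `z`. -/
def zvar : FF ℓ m l :=
  algebraMap (MvPolynomial (Var ℓ m l) K0) (FF ℓ m l) (X (Sum.inl ()))

/-- `s ∈ ℂ(s)`. -/
def sElt : K0 := RatFunc.X

/-- `q = s²`. -/
def qElt : K0 := RatFunc.X ^ 2

/-- `q^e` for an integer exponent `e`. -/
def qz (e : ℤ) : K0 := qElt ^ e

/-- `q_i^e = q^{d_i·e}`. -/
def qiz (i : Fin ℓ) (e : ℤ) : K0 := qElt ^ ((d i : ℤ) * e)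

/-- `q_i − q_i⁻¹`. -/
def qdiff (i : Fin ℓ) : K0 := qiz ℓ d i 1 - qiz ℓ d i (-1)

/-- `c_i = s^{Σ_j d_j·m_j·a_{ji}}`. -/
def cElt (i : Fin ℓ) : K0 := sElt ^ (∑ j : Fin ℓ, (d j : ℤ) * (m j : ℤ) * a j i)

/-- The algebra automorphism of the polynomial ring rescaling the variable `w` by the
nonzero constant `c` and fixing all other variables. -/
def scalePoly (c : K0) (hc : c ≠ 0) (w : Var ℓ m l) :
    MvPolynomial (Var ℓ m l) K0 ≃ₐ[K0] MvPolynomial (Var ℓ m l) K0 :=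
  AlgEquiv.ofAlgHom
    (aeval (fun j => if j = w then MvPolynomial.C c * X j else X j))
    (aeval (fun j => if j = w then MvPolynomial.C c⁻¹ * X j else X j))
    (by
      apply MvPolynomial.algHom_ext; intro j
      by_cases h : j = w <;>
        simp [h, ← mul_assoc, ← C_mul, mul_inv_cancel₀ hc, inv_mul_cancel₀ hc])
    (by
      apply MvPolynomial.algHom_ext; intro j
      by_cases h : j = w <;>
        simp [h, ← mul_assoc, ← C_mul, mul_inv_cancel₀ hc, inv_mul_cancel₀ hc])

/-- The induced automorphism of `F`. -/
def scaleField (c : K0) (hc : c ≠ 0) (w : Var ℓ m l) : FF ℓ m l ≃+* FF ℓ m l :=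
  IsFractionRing.ringEquivOfRingEquiv (scalePoly ℓ m l c hc w).toRingEquiv

/-- `u_{i,k}` : the automorphism `V_{i,k} ↦ q^{d_i}·V_{i,k}`. -/
def uik (i : Fin ℓ) (k : Fin (m i)) : FF ℓ m l ≃+* FF ℓ m l :=
  scaleField ℓ m l (qElt ^ (d i)) (pow_ne_zero _ (pow_ne_zero _ RatFunc.X_ne_zero))
    (Sum.inr (Sum.inl ⟨i, k⟩))

/-- The field `ℂ(s)({W_{i,t}})` of rational functions in the `W`-variables only:
the coefficient field for the polynomials `R_i^{(±)}`. -/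
abbrev WField := FractionRing (MvPolynomial ((i : Fin ℓ) × Fin (l i)) K0)

/-- `W_{i,t}` as an element of `ℂ(s)({W_{i,t}})`. -/
def Wsmall (i : Fin ℓ) (t : Fin (l i)) : WField ℓ l :=
  algebraMap (MvPolynomial ((i : Fin ℓ) × Fin (l i)) K0) (WField ℓ l) (X ⟨i, t⟩)

/-- The natural embedding `ℂ(s)({W_{i,t}}) ↪ F`. -/
def wEmb : WField ℓ l →+* FF ℓ m l :=
  IsFractionRing.lift (g :=
    ((algebraMap (MvPolynomial (Var ℓ m l) K0) (FF ℓ m l)).comp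
      (rename (fun w => Sum.inr (Sum.inr w))).toRingHom))
    ((IsFractionRing.injective (MvPolynomial (Var ℓ m l) K0) (FF ℓ m l)).comp
      (rename_injective _ (Sum.inr_injective.comp Sum.inr_injective)))

/-- Evaluation of a polynomial with coefficients in `ℂ(s)({W_{i,t}})` at a point of `F`. -/
def Rval (P : Polynomial (WField ℓ l)) (x : FF ℓ m l) : FF ℓ m l :=
  Polynomial.eval₂ (wEmb ℓ m l) x P

/-- Multiplication by the rational function `K_i(z)` (with `z` the extra variable). -/
def KopZ (i : Fin ℓ) : FF ℓ m l → FF ℓ m l := fun f =>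
  (cst ℓ m l (cElt ℓ m d a i) * (∏ j : Fin ℓ, ∏ p : Fin (m j), (V ℓ m l j p) ^ (a j i)) *
    (∏ t : Fin (l i), (zvar ℓ m l * (W ℓ m l i t)⁻¹ - W ℓ m l i t)) *
    (∏ j ∈ univ.erase i, ∏ r ∈ range (-(a j i)).toNat, ∏ p : Fin (m j),
      (zvar ℓ m l
        - cst ℓ m l (qz ((d j : ℤ) * (a j i + 2 * ((r : ℤ) + 1)))) * (V ℓ m l j p) ^ 2)) /
    (∏ p : Fin (m i),
      ((zvar ℓ m l - (V ℓ m l i p) ^ 2) *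
        (zvar ℓ m l - cst ℓ m l (qiz ℓ d i 2) * (V ℓ m l i p) ^ 2)))) * f

/-- The mode operator `E_i^{(n)}`. -/
def Enop (Rp : (i : Fin ℓ) → Polynomial (WField ℓ l)) (i : Fin ℓ) (n : ℤ) :
    FF ℓ m l → FF ℓ m l := fun f =>
  cst ℓ m l (cElt ℓ m d a i / qdiff ℓ d i) * (∏ p : Fin (m i), V ℓ m l i p) *
    (∏ j ∈ univ.filter (fun j => i < j), ∏ p : Fin (m j), (V ℓ m l j p) ^ (a j i)) *
    ∑ k : Fin (m i),
      ((V ℓ m l i k) ^ (2 * n - 2) * Rval ℓ m l (Rp i) ((V ℓ m l i k) ^ 2) *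
        (∏ j ∈ univ.filter (fun j => i < j), ∏ r ∈ range (-(a j i)).toNat, ∏ p : Fin (m j),
          ((V ℓ m l i k) ^ 2
            - cst ℓ m l (qz ((d j : ℤ) * (a j i + 2 * ((r : ℤ) + 1)))) * (V ℓ m l j p) ^ 2)) /
        (∏ p ∈ univ.erase k, ((V ℓ m l i k) ^ 2 - (V ℓ m l i p) ^ 2))) *
      (uik ℓ m l d i k).symm f

section AuxLemmas

variable {ℓ : ℕ} {m l : Fin ℓ → ℕ}

lemma am_injective (ℓ : ℕ) (m l : Fin ℓ → ℕ) :
    Function.Injective (algebraMap (MvPolynomial (Var ℓ m l) K0) (FF ℓ m l)) :=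
  IsFractionRing.injective _ _

lemma scaleField_algebraMap (c : K0) (hc : c ≠ 0) (w : Var ℓ m l)
    (P : MvPolynomial (Var ℓ m l) K0) :
    scaleField ℓ m l c hc w (algebraMap _ (FF ℓ m l) P)
      = algebraMap _ (FF ℓ m l) (scalePoly ℓ m l c hc w P) :=
  IsFractionRing.ringEquivOfRingEquiv_algebraMap _ _

lemma scaleField_symm_algebraMap (c : K0) (hc : c ≠ 0) (w : Var ℓ m l)
    (P : MvPolynomial (Var ℓ m l) K0) :
    (scaleField ℓ m l c hc w).symm (algebraMap _ (FF ℓ m l) P)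
      = algebraMap _ (FF ℓ m l) ((scalePoly ℓ m l c hc w).symm P) := by
  apply (scaleField ℓ m l c hc w).injective
  rw [RingEquiv.apply_symm_apply, scaleField_algebraMap, AlgEquiv.apply_symm_apply]

lemma scalePoly_symm_X (c : K0) (hc : c ≠ 0) (w v : Var ℓ m l) :
    (scalePoly ℓ m l c hc w).symm (X v)
      = if v = w then MvPolynomial.C c⁻¹ * X v else X v := by
  rw [scalePoly, AlgEquiv.ofAlgHom_symm]
  simp [AlgEquiv.ofAlgHom]

lemma scalePoly_symm_C (c : K0) (hc : c ≠ 0) (w : Var ℓ m l) (x : K0) :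
    (scalePoly ℓ m l c hc w).symm (MvPolynomial.C x) = MvPolynomial.C x := by
  rw [scalePoly, AlgEquiv.ofAlgHom_symm]
  simp [AlgEquiv.ofAlgHom]

end AuxLemmas

section AuxLemmas2

variable {ℓ : ℕ} {m l : Fin ℓ → ℕ}

lemma uik_symm_algebraMap (d : Fin ℓ → ℕ) (j : Fin ℓ) (k : Fin (m j))
    (P : MvPolynomial (Var ℓ m l) K0) :
    (uik ℓ m l d j k).symm (algebraMap _ (FF ℓ m l) P)
      = algebraMap _ (FF ℓ m l)
          ((scalePoly ℓ m l (qElt ^ (d j))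
            (pow_ne_zero _ (pow_ne_zero _ RatFunc.X_ne_zero))
            (Sum.inr (Sum.inl ⟨j, k⟩))).symm P) :=
  scaleField_symm_algebraMap _ _ _ _

lemma uik_symm_cst (d : Fin ℓ → ℕ) (j : Fin ℓ) (k : Fin (m j)) (c : K0) :
    (uik ℓ m l d j k).symm (cst ℓ m l c) = cst ℓ m l c := by
  rw [cst, cstHom, RingHom.comp_apply, uik_symm_algebraMap, scalePoly_symm_C]

lemma uik_symm_zvar (d : Fin ℓ → ℕ) (j : Fin ℓ) (k : Fin (m j)) :
    (uik ℓ m l d j k).symm (zvar ℓ m l) = zvar ℓ m l := by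
  rw [zvar, uik_symm_algebraMap, scalePoly_symm_X]
  simp

lemma uik_symm_W (d : Fin ℓ → ℕ) (j : Fin ℓ) (k : Fin (m j)) (i : Fin ℓ) (t : Fin (l i)) :
    (uik ℓ m l d j k).symm (W ℓ m l i t) = W ℓ m l i t := by
  rw [W, uik_symm_algebraMap, scalePoly_symm_X]
  simp

lemma uik_symm_V_self (d : Fin ℓ → ℕ) (j : Fin ℓ) (k : Fin (m j)) :
    (uik ℓ m l d j k).symm (V ℓ m l j k)
      = (cst ℓ m l qElt) ^ (-((d j : ℤ))) * V ℓ m l j k := by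
  have h1 : ((cst ℓ m l qElt) ^ (-((d j) : ℤ))) = cst ℓ m l ((qElt ^ (d j))⁻¹) := by
    rw [cst, cst, ← map_zpow₀ (cstHom ℓ m l), zpow_neg, zpow_natCast]
  rw [V, uik_symm_algebraMap, scalePoly_symm_X, if_pos rfl, map_mul, h1]
  rfl

lemma uik_symm_V_ne (d : Fin ℓ → ℕ) (j : Fin ℓ) (k : Fin (m j)) (j' : Fin ℓ) (k' : Fin (m j'))
    (h : (⟨j', k'⟩ : (i : Fin ℓ) × Fin (m i)) ≠ ⟨j, k⟩) :
    (uik ℓ m l d j k).symm (V ℓ m l j' k') = V ℓ m l j' k' := by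
  rw [V, uik_symm_algebraMap, scalePoly_symm_X, if_neg (by simpa using h)]

lemma X_FF_ne_zero (ℓ : ℕ) (m l : Fin ℓ → ℕ) (v : Var ℓ m l) :
    algebraMap (MvPolynomial (Var ℓ m l) K0) (FF ℓ m l) (X v) ≠ 0 := by
  rw [ne_eq, map_eq_zero_iff _ (am_injective ℓ m l)]
  exact MvPolynomial.X_ne_zero v

lemma V_ne_zero (ℓ : ℕ) (m l : Fin ℓ → ℕ) (i : Fin ℓ) (k : Fin (m i)) :
    V ℓ m l i k ≠ 0 := X_FF_ne_zero ℓ m l _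

lemma cst_ne_zero (ℓ : ℕ) (m l : Fin ℓ → ℕ) (c : K0) (hc : c ≠ 0) : cst ℓ m l c ≠ 0 := by
  rw [cst, ne_eq, map_eq_zero_iff _ (RingHom.injective _)]
  exact hc

lemma cstQ_ne_zero (ℓ : ℕ) (m l : Fin ℓ → ℕ) : cst ℓ m l qElt ≠ 0 :=
  cst_ne_zero ℓ m l _ (pow_ne_zero _ RatFunc.X_ne_zero)

lemma zsubc_ne_zero (ℓ : ℕ) (m l : Fin ℓ → ℕ) (c : K0) (i : Fin ℓ) (k : Fin (m i)) :
    zvar ℓ m l - cst ℓ m l c * (V ℓ m l i k) ^ 2 ≠ 0 := by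
  have hrw : zvar ℓ m l - cst ℓ m l c * (V ℓ m l i k) ^ 2
      = algebraMap (MvPolynomial (Var ℓ m l) K0) (FF ℓ m l)
          (X (Sum.inl ()) - MvPolynomial.C c * X (Sum.inr (Sum.inl ⟨i, k⟩)) ^ 2) := by
    simp [zvar, cst, cstHom, V]
  rw [hrw, ne_eq, map_eq_zero_iff _ (am_injective ℓ m l)]
  intro h
  have h2 := congrArg (aeval (fun u : Var ℓ m l => if u = Sum.inl () then (1 : K0) else 0)) h
  simp at h2

lemma zsub_ne_zero (ℓ : ℕ) (m l : Fin ℓ → ℕ) (i : Fin ℓ) (k : Fin (m i)) :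
    zvar ℓ m l - (V ℓ m l i k) ^ 2 ≠ 0 := by
  have hrw : zvar ℓ m l - (V ℓ m l i k) ^ 2
      = algebraMap (MvPolynomial (Var ℓ m l) K0) (FF ℓ m l)
          (X (Sum.inl ()) - X (Sum.inr (Sum.inl ⟨i, k⟩)) ^ 2) := by
    simp [zvar, V]
  rw [hrw, ne_eq, map_eq_zero_iff _ (am_injective ℓ m l)]
  intro h
  have h2 := congrArg (aeval (fun u : Var ℓ m l => if u = Sum.inl () then (1 : K0) else 0)) h
  simp at h2

end AuxLemmas2

section AuxKey

lemma cst_qz (ℓ : ℕ) (m l : Fin ℓ → ℕ) (e : ℤ) :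
    cst ℓ m l (qz e) = (cst ℓ m l qElt) ^ e := by
  rw [qz, cst, cst, map_zpow₀ (cstHom ℓ m l)]

lemma cst_qiz (ℓ : ℕ) (m l d : Fin ℓ → ℕ) (i : Fin ℓ) (e : ℤ) :
    cst ℓ m l (qiz ℓ d i e) = (cst ℓ m l qElt) ^ ((d i : ℤ) * e) := by
  rw [qiz, cst, cst, map_zpow₀ (cstHom ℓ m l)]

lemma key_abstract {F : Type*} [Field F] (φ : F ≃+* F) (A B C D E z v c : F)
    (hA : φ A = A) (hC : φ C = C) (hE : φ E = E)
    (hB : φ B = c⁻¹ * B)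
    (hD : φ D * (z - c⁻¹ * v) = D * (z - c * v))
    (hc : c ≠ 0) :
    (A * B * C * D / E) * (z - c * v) = (c * z - v) * φ (A * B * C * D / E) := by
  rw [map_div₀, map_mul, map_mul, map_mul, hA, hB, hC, hE,
    div_mul_eq_mul_div, mul_div_assoc']
  congr 1
  linear_combination (-(A * B * C)) * hD - A * B * C * (φ D) * z * (mul_inv_cancel₀ hc)

lemma key_abstract2 {F : Type*} [Field F] (φ : F ≃+* F) (A B C D E z v c : F)
    (hA : φ A = A) (hC : φ C = C) (hD : φ D = D)
    (hB : φ B = c⁻¹ * B)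
    (hE : φ E * (z - c * v) = E * (z - c⁻¹ * v))
    (hc : c ≠ 0) (hE0 : E ≠ 0) :
    (A * B * C * D / E) * (z - c * v) = (c * z - v) * φ (A * B * C * D / E) := by
  have hφE0 : φ E ≠ 0 := (map_ne_zero_iff φ φ.injective).mpr hE0
  rw [map_div₀, map_mul, map_mul, map_mul, hA, hB, hC, hD,
    div_mul_eq_mul_div, mul_div_assoc', div_eq_div_iff hE0 hφE0]
  linear_combination (A * B * C * D) * hE - (A * B * C * D * E * z) * (mul_inv_cancel₀ hc)

end AuxKey

section AuxConcrete

variable {ℓ : ℕ} {m l : Fin ℓ → ℕ}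

lemma sigma_ne_of_snd_ne {j : Fin ℓ} {p k : Fin (m j)} (h : p ≠ k) :
    (⟨j, p⟩ : (i : Fin ℓ) × Fin (m i)) ≠ ⟨j, k⟩ := by
  intro hh
  exact h (by simpa using hh)

lemma sigma_ne_of_fst_ne {j' j : Fin ℓ} {p : Fin (m j')} {k : Fin (m j)} (h : j' ≠ j) :
    (⟨j', p⟩ : (i : Fin ℓ) × Fin (m i)) ≠ ⟨j, k⟩ := by
  intro hh
  exact h (congrArg Sigma.fst hh)

/-- `uu` fixes the `W`-product. -/
lemma uik_symm_Cprod (d : Fin ℓ → ℕ) (i j : Fin ℓ) (k : Fin (m j)) :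
    (uik ℓ m l d j k).symm
        (∏ t : Fin (l i), (zvar ℓ m l * (W ℓ m l i t)⁻¹ - W ℓ m l i t))
      = ∏ t : Fin (l i), (zvar ℓ m l * (W ℓ m l i t)⁻¹ - W ℓ m l i t) := by
  rw [map_prod]
  refine Finset.prod_congr rfl fun t _ => ?_
  rw [map_sub, map_mul, map_inv₀, uik_symm_zvar, uik_symm_W]

/-- `uu` rescales the `V`-zpow-product. -/
lemma uik_symm_Bprod (d : Fin ℓ → ℕ) (a : Fin ℓ → Fin ℓ → ℤ) (i j : Fin ℓ) (k : Fin (m j)) :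
    (uik ℓ m l d j k).symm
        (∏ j' : Fin ℓ, ∏ p : Fin (m j'), (V ℓ m l j' p) ^ (a j' i))
      = (cst ℓ m l qElt) ^ (-((d j : ℤ) * a j i))
          * ∏ j' : Fin ℓ, ∏ p : Fin (m j'), (V ℓ m l j' p) ^ (a j' i) := by
  set Q := cst ℓ m l qElt with hQ
  rw [map_prod]
  have step : ∀ j' : Fin ℓ,
      (uik ℓ m l d j k).symm (∏ p : Fin (m j'), (V ℓ m l j' p) ^ (a j' i))
        = (if j' = j then Q ^ (-((d j : ℤ) * a j i)) else 1)
            * ∏ p : Fin (m j'), (V ℓ m l j' p) ^ (a j' i) := by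
    intro j'
    rw [map_prod]
    by_cases h : j' = j
    · subst h
      rw [if_pos rfl, ← Finset.mul_prod_erase univ
          (fun p => (uik ℓ m l d j' k).symm ((V ℓ m l j' p) ^ (a j' i))) (mem_univ k),
        ← Finset.mul_prod_erase univ (fun p => (V ℓ m l j' p) ^ (a j' i)) (mem_univ k),
        ← mul_assoc]
      have h1 : ∀ p ∈ univ.erase k,
          (uik ℓ m l d j' k).symm ((V ℓ m l j' p) ^ (a j' i))
            = (V ℓ m l j' p) ^ (a j' i) := by
        intro p hp
        rw [map_zpow₀, uik_symm_V_ne _ _ _ _ _ (sigma_ne_of_snd_ne (mem_erase.mp hp).1)]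
      rw [Finset.prod_congr rfl h1]
      congr 1
      rw [map_zpow₀, uik_symm_V_self, mul_zpow, ← hQ, ← zpow_mul, neg_mul]
    · rw [if_neg h, one_mul]
      refine Finset.prod_congr rfl fun p _ => ?_
      rw [map_zpow₀, uik_symm_V_ne _ _ _ _ _ (sigma_ne_of_fst_ne h)]
  rw [Finset.prod_congr rfl fun j' _ => step j', Finset.prod_mul_distrib,
    Finset.prod_ite_eq' univ j (fun _ => Q ^ (-((d j : ℤ) * a j i))), if_pos (mem_univ j)]

end AuxConcrete

section AuxDE

variable {ℓ : ℕ} {m l : Fin ℓ → ℕ}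

/-- `uu` fixes the denominator product when `i ≠ j`. -/
lemma uik_symm_E_ne (d : Fin ℓ → ℕ) (i j : Fin ℓ) (hij : i ≠ j) (k : Fin (m j)) :
    (uik ℓ m l d j k).symm (∏ p : Fin (m i), ((zvar ℓ m l - (V ℓ m l i p) ^ 2) *
        (zvar ℓ m l - cst ℓ m l (qiz ℓ d i 2) * (V ℓ m l i p) ^ 2)))
      = ∏ p : Fin (m i), ((zvar ℓ m l - (V ℓ m l i p) ^ 2) *
        (zvar ℓ m l - cst ℓ m l (qiz ℓ d i 2) * (V ℓ m l i p) ^ 2)) := by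
  rw [map_prod]
  refine Finset.prod_congr rfl fun p _ => ?_
  simp only [map_mul, map_sub, map_pow]
  rw [uik_symm_zvar, uik_symm_cst, uik_symm_V_ne _ _ _ _ _ (sigma_ne_of_fst_ne hij)]

/-- `uu` fixes the numerator `D`-product over a set avoiding `j`. -/
lemma uik_symm_D_fix (d : Fin ℓ → ℕ) (a : Fin ℓ → Fin ℓ → ℤ) (i j : Fin ℓ) (k : Fin (m j))
    (s : Finset (Fin ℓ)) (hs : j ∉ s) :
    (uik ℓ m l d j k).symm (∏ j' ∈ s, ∏ r ∈ range (-(a j' i)).toNat, ∏ p : Fin (m j'),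
        (zvar ℓ m l - cst ℓ m l (qz ((d j' : ℤ) * (a j' i + 2 * ((r : ℤ) + 1))))
          * (V ℓ m l j' p) ^ 2))
      = ∏ j' ∈ s, ∏ r ∈ range (-(a j' i)).toNat, ∏ p : Fin (m j'),
        (zvar ℓ m l - cst ℓ m l (qz ((d j' : ℤ) * (a j' i + 2 * ((r : ℤ) + 1))))
          * (V ℓ m l j' p) ^ 2) := by
  rw [map_prod]
  refine Finset.prod_congr rfl fun j' hj' => ?_
  rw [map_prod]
  refine Finset.prod_congr rfl fun r _ => ?_
  rw [map_prod]
  refine Finset.prod_congr rfl fun p _ => ?_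
  have hne : j' ≠ j := fun h => hs (h ▸ hj')
  rw [map_sub, map_mul, map_pow, uik_symm_zvar, uik_symm_cst,
    uik_symm_V_ne _ _ _ _ _ (sigma_ne_of_fst_ne hne)]

/-- The telescoping identity for the `j`-part of the `D`-product (case `i ≠ j`). -/
lemma uik_symm_D_tel (d : Fin ℓ → ℕ) (a : Fin ℓ → Fin ℓ → ℤ) (i j : Fin ℓ) (k : Fin (m j))
    (hji : a j i ≤ 0) :
    (uik ℓ m l d j k).symm (∏ r ∈ range (-(a j i)).toNat, ∏ p : Fin (m j),
          (zvar ℓ m l - cst ℓ m l (qz ((d j : ℤ) * (a j i + 2 * ((r : ℤ) + 1))))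
            * (V ℓ m l j p) ^ 2))
        * (zvar ℓ m l - (cst ℓ m l qElt) ^ (-((d j : ℤ) * a j i)) * (V ℓ m l j k) ^ 2)
      = (∏ r ∈ range (-(a j i)).toNat, ∏ p : Fin (m j),
          (zvar ℓ m l - cst ℓ m l (qz ((d j : ℤ) * (a j i + 2 * ((r : ℤ) + 1))))
            * (V ℓ m l j p) ^ 2))
        * (zvar ℓ m l - (cst ℓ m l qElt) ^ ((d j : ℤ) * a j i) * (V ℓ m l j k) ^ 2) := by
  set Q := cst ℓ m l qElt with hQ
  have hQne : Q ≠ 0 := cstQ_ne_zero ℓ m l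
  set N := (-(a j i)).toNat with hN
  have hNat : (N : ℤ) = -(a j i) := Int.toNat_of_nonneg (by omega)
  set g : ℕ → FF ℓ m l := fun t =>
    zvar ℓ m l - Q ^ ((d j : ℤ) * (a j i + 2 * (t : ℤ))) * (V ℓ m l j k) ^ 2 with hg
  set P : ℕ → FF ℓ m l := fun r => ∏ p ∈ univ.erase k,
    (zvar ℓ m l - cst ℓ m l (qz ((d j : ℤ) * (a j i + 2 * ((r : ℤ) + 1))))
      * (V ℓ m l j p) ^ 2) with hP
  have hsplit : (∏ r ∈ range N, ∏ p : Fin (m j),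
      (zvar ℓ m l - cst ℓ m l (qz ((d j : ℤ) * (a j i + 2 * ((r : ℤ) + 1))))
        * (V ℓ m l j p) ^ 2)) = ∏ r ∈ range N, (g (r + 1) * P r) := by
    refine Finset.prod_congr rfl fun r _ => ?_
    rw [← Finset.mul_prod_erase univ _ (mem_univ k)]
    congr 1
    have hexp : (d j : ℤ) * (a j i + 2 * ((r : ℤ) + 1))
        = (d j : ℤ) * (a j i + 2 * (((r + 1 : ℕ) : ℤ))) := by push_cast; ring
    simp only [hg]
    rw [cst_qz, ← hQ, hexp]
  have husplit : (uik ℓ m l d j k).symm (∏ r ∈ range N, ∏ p : Fin (m j),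
      (zvar ℓ m l - cst ℓ m l (qz ((d j : ℤ) * (a j i + 2 * ((r : ℤ) + 1))))
        * (V ℓ m l j p) ^ 2)) = ∏ r ∈ range N, (g r * P r) := by
    rw [map_prod]
    refine Finset.prod_congr rfl fun r _ => ?_
    rw [map_prod]
    have h1 : ∀ p ∈ univ.erase k,
        (uik ℓ m l d j k).symm
          (zvar ℓ m l - cst ℓ m l (qz ((d j : ℤ) * (a j i + 2 * ((r : ℤ) + 1))))
            * (V ℓ m l j p) ^ 2)
          = zvar ℓ m l - cst ℓ m l (qz ((d j : ℤ) * (a j i + 2 * ((r : ℤ) + 1))))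
            * (V ℓ m l j p) ^ 2 := by
      intro p hp
      rw [map_sub, map_mul, map_pow, uik_symm_zvar, uik_symm_cst,
        uik_symm_V_ne _ _ _ _ _ (sigma_ne_of_snd_ne (mem_erase.mp hp).1)]
    rw [← Finset.mul_prod_erase univ _ (mem_univ k), Finset.prod_congr rfl h1]
    congr 1
    rw [map_sub, map_mul, map_pow, uik_symm_zvar, uik_symm_cst, uik_symm_V_self,
      cst_qz, ← hQ, mul_pow, ← zpow_natCast (Q ^ (-((d j) : ℤ))) 2, ← zpow_mul,
      ← mul_assoc, ← zpow_add₀ hQne]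
    simp only [hg]
    congr 2
    push_cast
    ring
  rw [husplit, hsplit, Finset.prod_mul_distrib, Finset.prod_mul_distrib]
  have hgN : zvar ℓ m l - Q ^ (-((d j : ℤ) * a j i)) * (V ℓ m l j k) ^ 2 = g N := by
    simp only [hg]
    congr 2
    rw [hNat]
    ring
  have hg0 : zvar ℓ m l - Q ^ ((d j : ℤ) * a j i) * (V ℓ m l j k) ^ 2 = g 0 := by
    simp only [hg]
    congr 2
    push_cast
    ring
  rw [hgN, hg0]
  have htel : (∏ r ∈ range N, g r) * g N = g 0 * ∏ r ∈ range N, g (r + 1) := by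
    rw [← Finset.prod_range_succ g N, Finset.prod_range_succ' g N]
    ring
  linear_combination (∏ r ∈ range N, P r) * htel

/-- The `E`-exchange identity (case `i = j`). -/
lemma uik_symm_E_tel (d : Fin ℓ → ℕ) (j : Fin ℓ) (k : Fin (m j)) :
    (uik ℓ m l d j k).symm (∏ p : Fin (m j), ((zvar ℓ m l - (V ℓ m l j p) ^ 2) *
          (zvar ℓ m l - cst ℓ m l (qiz ℓ d j 2) * (V ℓ m l j p) ^ 2)))
        * (zvar ℓ m l - (cst ℓ m l qElt) ^ ((d j : ℤ) * 2) * (V ℓ m l j k) ^ 2)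
      = (∏ p : Fin (m j), ((zvar ℓ m l - (V ℓ m l j p) ^ 2) *
          (zvar ℓ m l - cst ℓ m l (qiz ℓ d j 2) * (V ℓ m l j p) ^ 2)))
        * (zvar ℓ m l - (cst ℓ m l qElt) ^ (-((d j : ℤ) * 2)) * (V ℓ m l j k) ^ 2) := by
  set Q := cst ℓ m l qElt with hQ
  have hQne : Q ≠ 0 := cstQ_ne_zero ℓ m l
  have hfix : ∀ p ∈ univ.erase k,
      (uik ℓ m l d j k).symm ((zvar ℓ m l - (V ℓ m l j p) ^ 2) *
          (zvar ℓ m l - cst ℓ m l (qiz ℓ d j 2) * (V ℓ m l j p) ^ 2))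
        = (zvar ℓ m l - (V ℓ m l j p) ^ 2) *
          (zvar ℓ m l - cst ℓ m l (qiz ℓ d j 2) * (V ℓ m l j p) ^ 2) := by
    intro p hp
    simp only [map_mul, map_sub, map_pow]
    rw [uik_symm_zvar, uik_symm_cst, uik_symm_V_ne _ _ _ _ _ (sigma_ne_of_snd_ne (mem_erase.mp hp).1)]
  rw [map_prod, ← Finset.mul_prod_erase univ _ (mem_univ k), Finset.prod_congr rfl hfix,
    ← Finset.mul_prod_erase univ (fun p => (zvar ℓ m l - (V ℓ m l j p) ^ 2) *
          (zvar ℓ m l - cst ℓ m l (qiz ℓ d j 2) * (V ℓ m l j p) ^ 2)) (mem_univ k)]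
  have hk : (uik ℓ m l d j k).symm ((zvar ℓ m l - (V ℓ m l j k) ^ 2) *
        (zvar ℓ m l - cst ℓ m l (qiz ℓ d j 2) * (V ℓ m l j k) ^ 2))
      = (zvar ℓ m l - Q ^ (-((d j : ℤ) * 2)) * (V ℓ m l j k) ^ 2) *
        (zvar ℓ m l - (V ℓ m l j k) ^ 2) := by
    simp only [map_mul, map_sub, map_pow]
    rw [uik_symm_zvar, uik_symm_cst, uik_symm_V_self, cst_qiz, ← hQ, mul_pow,
      ← zpow_natCast (Q ^ (-((d j) : ℤ))) 2, ← zpow_mul, ← mul_assoc, ← zpow_add₀ hQne]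
    push_cast
    have h1 : (-((d j) : ℤ)) * 2 = -((d j : ℤ) * 2) := by ring
    have h2 : (d j : ℤ) * 2 + (-((d j) : ℤ)) * (2 : ℤ) = 0 := by ring
    rw [h2, zpow_zero, one_mul, h1]
  rw [hk, cst_qiz, ← hQ]
  ring

/-- The denominator is nonzero. -/
lemma E_ne_zero (ℓ : ℕ) (m l : Fin ℓ → ℕ) (d : Fin ℓ → ℕ) (i : Fin ℓ) :
    (∏ p : Fin (m i), ((zvar ℓ m l - (V ℓ m l i p) ^ 2) *
        (zvar ℓ m l - cst ℓ m l (qiz ℓ d i 2) * (V ℓ m l i p) ^ 2))) ≠ 0 :=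
  Finset.prod_ne_zero_iff.mpr fun p _ =>
    mul_ne_zero (zsub_ne_zero ℓ m l i p) (zsubc_ne_zero ℓ m l _ i p)

end AuxDE

section AuxKeyConcrete

variable {ℓ : ℕ} {m l : Fin ℓ → ℕ}

lemma uik_symm_D_full (d : Fin ℓ → ℕ) (a : Fin ℓ → Fin ℓ → ℤ) (i j : Fin ℓ) (hij : i ≠ j)
    (k : Fin (m j)) (hji : a j i ≤ 0) :
    (uik ℓ m l d j k).symm (∏ j' ∈ univ.erase i, ∏ r ∈ range (-(a j' i)).toNat,
          ∏ p : Fin (m j'),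
          (zvar ℓ m l - cst ℓ m l (qz ((d j' : ℤ) * (a j' i + 2 * ((r : ℤ) + 1))))
            * (V ℓ m l j' p) ^ 2))
        * (zvar ℓ m l - (cst ℓ m l qElt) ^ (-((d j : ℤ) * a j i)) * (V ℓ m l j k) ^ 2)
      = (∏ j' ∈ univ.erase i, ∏ r ∈ range (-(a j' i)).toNat, ∏ p : Fin (m j'),
          (zvar ℓ m l - cst ℓ m l (qz ((d j' : ℤ) * (a j' i + 2 * ((r : ℤ) + 1))))
            * (V ℓ m l j' p) ^ 2))
        * (zvar ℓ m l - (cst ℓ m l qElt) ^ ((d j : ℤ) * a j i) * (V ℓ m l j k) ^ 2) := by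
  have hjmem : j ∈ univ.erase i := mem_erase.mpr ⟨Ne.symm hij, mem_univ j⟩
  rw [← Finset.mul_prod_erase (univ.erase i)
    (fun j' => ∏ r ∈ range (-(a j' i)).toNat, ∏ p : Fin (m j'),
      (zvar ℓ m l - cst ℓ m l (qz ((d j' : ℤ) * (a j' i + 2 * ((r : ℤ) + 1))))
        * (V ℓ m l j' p) ^ 2)) hjmem, map_mul,
    uik_symm_D_fix d a i j k ((univ.erase i).erase j) (Finset.notMem_erase j _)]
  have htel := uik_symm_D_tel (l := l) d a i j k hji
  linear_combination (∏ j' ∈ (univ.erase i).erase j, ∏ r ∈ range (-(a j' i)).toNat,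
    ∏ p : Fin (m j'),
    (zvar ℓ m l - cst ℓ m l (qz ((d j' : ℤ) * (a j' i + 2 * ((r : ℤ) + 1))))
      * (V ℓ m l j' p) ^ 2)) * htel

lemma key_concrete (ℓ : ℕ) (m l d : Fin ℓ → ℕ) (a : Fin ℓ → Fin ℓ → ℤ)
    (ha : ∀ i, a i i = 2) (ha' : ∀ i j, i ≠ j → a i j ≤ 0)
    (hsym : ∀ i j, (d i : ℤ) * a i j = (d j : ℤ) * a j i)
    (i j : Fin ℓ) (k : Fin (m j)) :
    KopZ ℓ m l d a i 1 * (zvar ℓ m l - cst ℓ m l (qiz ℓ d i (a i j)) * (V ℓ m l j k) ^ 2)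
      = (cst ℓ m l (qiz ℓ d i (a i j)) * zvar ℓ m l - (V ℓ m l j k) ^ 2)
          * (uik ℓ m l d j k).symm (KopZ ℓ m l d a i 1) := by
  have hQne : cst ℓ m l qElt ≠ 0 := cstQ_ne_zero ℓ m l
  have hc' : cst ℓ m l (qiz ℓ d i (a i j)) = (cst ℓ m l qElt) ^ ((d j : ℤ) * a j i) := by
    rw [cst_qiz, hsym i j]
  simp only [KopZ, mul_one]
  rw [hc']
  by_cases hij : i = j
  · subst hij
    rw [ha i]
    have hcne : (cst ℓ m l qElt) ^ ((d i : ℤ) * (2 : ℤ)) ≠ 0 := zpow_ne_zero _ hQne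
    have hB := uik_symm_Bprod (l := l) d a i i k
    rw [ha i, zpow_neg] at hB
    have hE := uik_symm_E_tel (l := l) d i k
    rw [zpow_neg] at hE
    exact key_abstract2 _ _ _ _ _ _ _ _ _
      (uik_symm_cst d i k _) (uik_symm_Cprod d i i k)
      (uik_symm_D_fix d a i i k (univ.erase i) (Finset.notMem_erase i _))
      hB hE hcne (E_ne_zero ℓ m l d i)
  · have hcne : (cst ℓ m l qElt) ^ ((d j : ℤ) * a j i) ≠ 0 := zpow_ne_zero _ hQne
    have hB := uik_symm_Bprod (l := l) d a i j k
    rw [zpow_neg] at hB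
    have hD := uik_symm_D_full (l := l) d a i j hij k (ha' j i (Ne.symm hij))
    rw [zpow_neg] at hD
    exact key_abstract _ _ _ _ _ _ _ _ _
      (uik_symm_cst d j k _) (uik_symm_Cprod d i j k)
      (uik_symm_E_ne d i j hij k) hB hD hcne

end AuxKeyConcrete

section AuxFinal

lemma per_k {F : Type*} [Field F] (G uG P R X Y uf v z c : F) (n : ℤ) (hv : v ≠ 0)
    (hkey : G * (z - c * v ^ 2) = (c * z - v ^ 2) * uG) :
    z * (G * (P * (v ^ (2 * n - 2) * R * X / Y * uf)))
        - c * (G * (P * (v ^ (2 * (n + 1) - 2) * R * X / Y * uf)))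
      = c * z * (P * (v ^ (2 * n - 2) * R * X / Y * (uG * uf)))
        - P * (v ^ (2 * (n + 1) - 2) * R * X / Y * (uG * uf)) := by
  have hzp : v ^ (2 * (n + 1) - 2) = v ^ (2 : ℕ) * v ^ (2 * n - 2) := by
    rw [← zpow_natCast v 2, ← zpow_add₀ hv]
    congr 1
    push_cast
    ring
  rw [hzp]
  linear_combination (P * (v ^ (2 * n - 2) * R * X / Y * uf)) * hkey

end AuxFinal

/-- the quantum affine Cartan–raising relation, mode-wise. -/
theorem qaffine_KE
    (ℓ : ℕ) (hℓ : 1 ≤ ℓ)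
    (a : Fin ℓ → Fin ℓ → ℤ) (ha : ∀ i, a i i = 2) (ha' : ∀ i j, i ≠ j → a i j ≤ 0)
    (d : Fin ℓ → ℕ) (hd : ∀ i, 0 < d i)
    (hsym : ∀ i j, (d i : ℤ) * a i j = (d j : ℤ) * a j i)
    (m : Fin ℓ → ℕ) (hm : ∀ i, 0 < m i)
    (l : Fin ℓ → ℕ) (hln : ∀ i, (l i : ℤ) = ∑ j, (m j : ℤ) * a j i)
    (Rp Rm : (i : Fin ℓ) → Polynomial (WField ℓ l))
    (hR : ∀ i, Rp i * Rm i =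
      ∏ t : Fin (l i), (Polynomial.X * Polynomial.C (Wsmall ℓ l i t)⁻¹
        - Polynomial.C (Wsmall ℓ l i t)))
    (i j : Fin ℓ) (n : ℤ) :
    zvar ℓ m l • (KopZ ℓ m l d a i ∘ Enop ℓ m l d a Rp j n)
        - cst ℓ m l (qiz ℓ d i (a i j)) • (KopZ ℓ m l d a i ∘ Enop ℓ m l d a Rp j (n + 1))
      = (cst ℓ m l (qiz ℓ d i (a i j)) * zvar ℓ m l) •
            (Enop ℓ m l d a Rp j n ∘ KopZ ℓ m l d a i)
        - Enop ℓ m l d a Rp j (n + 1) ∘ KopZ ℓ m l d a i := by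
  funext f
  simp only [Pi.sub_apply, Pi.smul_apply, Function.comp_apply, smul_eq_mul]
  have hKmul : ∀ x : FF ℓ m l, KopZ ℓ m l d a i x = KopZ ℓ m l d a i 1 * x := by
    intro x
    simp only [KopZ, mul_one]
  rw [hKmul (Enop ℓ m l d a Rp j n f), hKmul (Enop ℓ m l d a Rp j (n + 1) f), hKmul f]
  simp only [Enop, map_mul, Finset.mul_sum]
  rw [← Finset.sum_sub_distrib, ← Finset.sum_sub_distrib]
  refine Finset.sum_congr rfl fun k _ => ?_
  exact per_k _ _ _ _ _ _ _ _ _ _ n (V_ne_zero ℓ m l j k)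
    (key_concrete ℓ m l d a ha ha' hsym i j k)
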